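/- Let X be a locally compact metrizable space and let G be a bounded group of lattice isomorphisms of C₀(X), i.e., a group under composition of lattice isomorphisms for which there exists C ≥ 1 with C⁻¹‖x‖_∞ ≤ ‖g x‖_∞ ≤ C‖x‖_∞ for all g ∈ G and x ∈ C₀(X). Define ‖x‖_G = sup_{g ∈ G} ‖g x‖_∞. Then there exists a (not necessarily continuous) function m_G : X → (0, ∞), bounded and bounded away from 0, such that ‖x‖_G = sup_{t ∈ X} m_G(t)·|x(t)| for every x ∈ C₀(X). -/

import Mathlib

/-! For a set `G` of lattice isomorphisms containing the identity and bounded by `C`, the orbit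
norm `N x = sup_g ‖g x‖` is a lattice norm with the M-property `N (x ⊔ y) ≤ max (N x) (N y)` and
`‖x‖ ≤ N x ≤ C ‖x‖`. For such a norm take `m t = inf {N u : u t = 1}`; homogeneity gives
`m t |x t| ≤ N x`. Conversely, for `ε > 0` compactness of `{ε ≤ |x|}` yields finitely many `u_t`
with `u_t t = 1`, `N u_t ≤ m t + ε` and `|x| ≤ max_t |x t| u_t + ε`; the M-property bounds `N` of
the finite maximum by `sup_t m t |x t| + ε ‖x‖`, and the error term of size `ε` costs `C ε`. -/

open ZeroAtInfty Filter Topology Metric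

noncomputable section

def c0sup {X : Type*} [TopologicalSpace X] (f g : C₀(X, ℝ)) : C₀(X, ℝ) where
  toFun := fun t => max (f t) (g t)
  continuous_toFun := (map_continuous f).max (map_continuous g)
  zero_at_infty' := by simpa using (zero_at_infty f).max (zero_at_infty g)

section

variable {X : Type*} [TopologicalSpace X]

@[simp]
lemma c0sup_apply (f g : C₀(X, ℝ)) (t : X) : c0sup f g t = max (f t) (g t) := rfl

def c0abs (x : C₀(X, ℝ)) : C₀(X, ℝ) := c0sup x (-x)

@[simp]
lemma c0abs_apply (x : C₀(X, ℝ)) (t : X) : c0abs x t = |x t| := abs_eq_max_neg.symm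

namespace ZeroAtInftyContinuousMap

lemma abs_apply_le_norm (x : C₀(X, ℝ)) (t : X) : |x t| ≤ ‖x‖ := by
  rw [← norm_toBCF_eq_norm]
  exact x.toBCF.norm_coe_le_norm t

lemma norm_le_of_forall_abs_le (x : C₀(X, ℝ)) {M : ℝ} (hM : 0 ≤ M) (h : ∀ t, |x t| ≤ M) :
    ‖x‖ ≤ M := by
  rw [← norm_toBCF_eq_norm]
  exact (BoundedContinuousFunction.norm_le hM).mpr h

lemma norm_le_norm_of_abs_le {x y : C₀(X, ℝ)} (h : ∀ t, |x t| ≤ |y t|) : ‖x‖ ≤ ‖y‖ :=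
  x.norm_le_of_forall_abs_le (norm_nonneg y) fun t => (h t).trans (y.abs_apply_le_norm t)

lemma norm_c0sup_le (x y : C₀(X, ℝ)) : ‖c0sup x y‖ ≤ max ‖x‖ ‖y‖ :=
  (c0sup x y).norm_le_of_forall_abs_le (le_max_of_le_left (norm_nonneg x)) fun t =>
    abs_max_le_max_abs_abs.trans (max_le_max (x.abs_apply_le_norm t) (y.abs_apply_le_norm t))

lemma isCompact_setOf_le_abs (x : C₀(X, ℝ)) {ε : ℝ} (hε : 0 < ε) :
    IsCompact {t | ε ≤ |x t|} := by
  obtain ⟨K, hK, hsub⟩ := mem_cocompact.mp (zero_at_infty x (ball_mem_nhds (0 : ℝ) hε))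
  refine hK.of_isClosed_subset (isClosed_le continuous_const (map_continuous x).abs) fun t ht => ?_
  by_contra htK
  have := hsub htK
  simp only [Set.mem_preimage, mem_ball, dist_zero_right, Real.norm_eq_abs] at this
  exact (not_le.mpr this) ht

lemma exists_norm_eq_one_apply_eq_one [RegularSpace X] [LocallyCompactSpace X] (t : X) :
    ∃ u : C₀(X, ℝ), ‖u‖ = 1 ∧ u t = 1 := by
  obtain ⟨f, hf1, -, hfc, hf01⟩ := exists_continuous_one_zero_of_isCompact
    (isCompact_singleton (x := t)) isClosed_empty (Set.disjoint_empty _)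
  let u : C₀(X, ℝ) := ⟨f, hfc.is_zero_at_infty⟩
  have hut : u t = 1 := hf1 rfl
  refine ⟨u, le_antisymm ?_ ?_, hut⟩
  · exact u.norm_le_of_forall_abs_le zero_le_one fun s =>
      (abs_of_nonneg (hf01 s).1).trans_le (hf01 s).2
  · simpa [hut] using u.abs_apply_le_norm t

lemma exists_finset_abs_lt_add (x : C₀(X, ℝ)) {ε : ℝ} (hε : 0 < ε) (u : X → C₀(X, ℝ))
    (hu : ∀ t, u t t = 1) :
    ∃ T : Finset X, ∀ s, ε ≤ |x s| → ∃ t ∈ T, |x s| < |x t| * u t s + ε := by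
  obtain ⟨T, -, hT⟩ := (x.isCompact_setOf_le_abs hε).elim_nhds_subcover
    (fun t => {s | |x s| < |x t| * u t s + ε})
    (fun t _ => (isOpen_lt (by fun_prop) (by fun_prop)).mem_nhds (by simp [hu t, hε]))
  exact ⟨T, fun s hs => by simpa using hT hs⟩

end ZeroAtInftyContinuousMap

open ZeroAtInftyContinuousMap

section LatticeHom

variable {F : Type*} [FunLike F C₀(X, ℝ) C₀(X, ℝ)] {g : F}

lemma apply_le_apply_of_map_c0sup (hg : ∀ f₁ f₂, g (c0sup f₁ f₂) = c0sup (g f₁) (g f₂))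
    {x y : C₀(X, ℝ)} (h : ∀ s, x s ≤ y s) (s : X) : g x s ≤ g y s := by
  have hxy : c0sup x y = y := ext fun t => max_eq_right (h t)
  have := congrArg (· s) (hg x y)
  simp only [hxy, c0sup_apply] at this
  exact le_of_max_le_left this.ge

variable [AddMonoidHomClass F C₀(X, ℝ) C₀(X, ℝ)]

lemma map_c0abs_of_map_c0sup (hg : ∀ f₁ f₂, g (c0sup f₁ f₂) = c0sup (g f₁) (g f₂))
    (x : C₀(X, ℝ)) : g (c0abs x) = c0abs (g x) := by
  rw [c0abs, hg, map_neg, c0abs]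

lemma norm_map_le_of_abs_le (hg : ∀ f₁ f₂, g (c0sup f₁ f₂) = c0sup (g f₁) (g f₂))
    {x y : C₀(X, ℝ)} (h : ∀ s, |x s| ≤ |y s|) : ‖g x‖ ≤ ‖g y‖ :=
  norm_le_norm_of_abs_le fun s => by
    simpa [map_c0abs_of_map_c0sup hg] using
      apply_le_apply_of_map_c0sup hg (x := c0abs x) (y := c0abs y) (by simpa using h) s

end LatticeHom

structure IsEquivMNorm (N : C₀(X, ℝ) → ℝ) (C : ℝ) : Prop where
  norm_le : ∀ x, ‖x‖ ≤ N x
  le_mul_norm : ∀ x, N x ≤ C * ‖x‖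
  mono : ∀ x y, (∀ s, |x s| ≤ |y s|) → N x ≤ N y
  add_le : ∀ x y, N (x + y) ≤ N x + N y
  smul_le : ∀ c : ℝ, 0 ≤ c → ∀ x, N (c • x) ≤ c * N x
  c0sup_le : ∀ x y, N (c0sup x y) ≤ max (N x) (N y)

def pointWeight (N : C₀(X, ℝ) → ℝ) (t : X) : ℝ := sInf (N '' {u | u t = 1})

lemma exists_apply_eq_one_lt_pointWeight_add [RegularSpace X] [LocallyCompactSpace X]
    (N : C₀(X, ℝ) → ℝ) (t : X) {ε : ℝ} (hε : 0 < ε) :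
    ∃ u : C₀(X, ℝ), u t = 1 ∧ N u < pointWeight N t + ε := by
  obtain ⟨u, -, hut⟩ := exists_norm_eq_one_apply_eq_one t
  obtain ⟨_, ⟨v, hvt, rfl⟩, hlt⟩ :=
    exists_lt_of_csInf_lt (s := N '' {u | u t = 1}) ⟨N u, u, hut, rfl⟩
      (lt_add_of_pos_right (pointWeight N t) hε)
  exact ⟨v, hvt, hlt⟩

namespace IsEquivMNorm

variable {N : C₀(X, ℝ) → ℝ} {C : ℝ}

lemma nonneg (hN : IsEquivMNorm N C) (x : C₀(X, ℝ)) : 0 ≤ N x :=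
  (norm_nonneg x).trans (hN.norm_le x)

lemma bddBelow_image_apply_eq_one (hN : IsEquivMNorm N C) (t : X) :
    BddBelow (N '' {u | u t = 1}) :=
  ⟨0, by rintro _ ⟨u, -, rfl⟩; exact hN.nonneg u⟩

lemma pointWeight_le_of_apply_eq_one (hN : IsEquivMNorm N C) {u : C₀(X, ℝ)} {t : X}
    (hu : u t = 1) :
    pointWeight N t ≤ N u :=
  csInf_le (hN.bddBelow_image_apply_eq_one t) ⟨u, hu, rfl⟩

lemma pointWeight_mul_abs_le (hN : IsEquivMNorm N C) (x : C₀(X, ℝ)) (t : X) :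
    pointWeight N t * |x t| ≤ N x := by
  rcases eq_or_ne (x t) 0 with hxt | hxt
  · simpa [hxt] using hN.nonneg x
  have habs : 0 < |x t| := abs_pos.mpr hxt
  have hv : ((x t)⁻¹ • x) t = 1 := inv_mul_cancel₀ hxt
  have hNv : N ((x t)⁻¹ • x) ≤ |x t|⁻¹ * N x :=
    calc N ((x t)⁻¹ • x) ≤ N (|x t|⁻¹ • x) := hN.mono _ _ fun s => by simp [abs_mul]
      _ ≤ |x t|⁻¹ * N x := hN.smul_le _ (inv_nonneg.mpr habs.le) x
  calc pointWeight N t * |x t| ≤ |x t|⁻¹ * N x * |x t| :=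
        mul_le_mul_of_nonneg_right ((hN.pointWeight_le_of_apply_eq_one hv).trans hNv) habs.le
    _ = N x := by field_simp

lemma exists_nonneg_upperBound_le (hN : IsEquivMNorm N C) {ι : Type*} (T : Finset ι)
    (f : ι → C₀(X, ℝ)) {B : ℝ} (hB : 0 ≤ B) (hf : ∀ i ∈ T, N (f i) ≤ B) :
    ∃ F : C₀(X, ℝ), (∀ s, 0 ≤ F s) ∧ (∀ i ∈ T, ∀ s, f i s ≤ F s) ∧ N F ≤ B := by
  classical
  induction T using Finset.induction_on with
  | empty =>
    exact ⟨0, fun _ => le_rfl, by simp, (hN.le_mul_norm 0).trans (by simpa using hB)⟩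
  | insert i T _ ih =>
    obtain ⟨F, hF0, hfF, hNF⟩ := ih fun j hj => hf j (Finset.mem_insert_of_mem hj)
    refine ⟨c0sup (f i) F, fun s => le_max_of_le_right (hF0 s), ?_, ?_⟩
    · intro j hj s
      rcases Finset.mem_insert.mp hj with rfl | hj
      · exact le_max_left _ _
      · exact le_max_of_le_right (hfF j hj s)
    · exact (hN.c0sup_le _ _).trans (max_le (hf i (Finset.mem_insert_self i T)) hNF)

lemma le_add_of_abs_le_add (hN : IsEquivMNorm N C) (hC : 0 ≤ C) {x F : C₀(X, ℝ)} {ε : ℝ}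
    (hε : 0 ≤ ε) (hF : ∀ s, 0 ≤ F s) (hxF : ∀ s, |x s| ≤ F s + ε) : N x ≤ N F + C * ε := by
  set r := c0sup (c0abs x - F) 0
  have hr : ∀ s, r s = max (|x s| - F s) 0 := fun s => by simp [r]
  have hr_norm : ‖r‖ ≤ ε := r.norm_le_of_forall_abs_le hε fun s => by
    rw [hr, abs_of_nonneg (le_max_right _ _)]
    exact max_le (by linarith [hxF s]) hε
  calc N x ≤ N (F + r) := hN.mono _ _ fun s => by
        rw [ZeroAtInftyContinuousMap.add_apply, hr,
          abs_of_nonneg (add_nonneg (hF s) (le_max_right _ _))]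
        linarith [le_max_left (|x s| - F s) 0]
    _ ≤ N F + N r := hN.add_le F r
    _ ≤ N F + C * ε := by
        gcongr
        exact (hN.le_mul_norm r).trans (mul_le_mul_of_nonneg_left hr_norm hC)

variable [RegularSpace X] [LocallyCompactSpace X]

lemma one_le_pointWeight (hN : IsEquivMNorm N C) (t : X) : 1 ≤ pointWeight N t := by
  obtain ⟨u, -, hut⟩ := exists_norm_eq_one_apply_eq_one t
  refine le_csInf ⟨N u, u, hut, rfl⟩ ?_
  rintro _ ⟨v, hvt : v t = 1, rfl⟩
  simpa [hvt] using (v.abs_apply_le_norm t).trans (hN.norm_le v)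

lemma pointWeight_le (hN : IsEquivMNorm N C) (t : X) : pointWeight N t ≤ C := by
  obtain ⟨u, hu1, hut⟩ := exists_norm_eq_one_apply_eq_one t
  simpa [hu1] using (hN.pointWeight_le_of_apply_eq_one hut).trans (hN.le_mul_norm u)

lemma le_iSup_pointWeight_mul_abs (hN : IsEquivMNorm N C) (hC : 0 ≤ C) (x : C₀(X, ℝ)) :
    N x ≤ ⨆ t, pointWeight N t * |x t| := by
  set S := ⨆ t, pointWeight N t * |x t|
  have hS : ∀ t, pointWeight N t * |x t| ≤ S :=
    le_ciSup ⟨N x, by rintro _ ⟨t, rfl⟩; exact hN.pointWeight_mul_abs_le x t⟩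
  have hS0 : 0 ≤ S := Real.iSup_nonneg fun t =>
    mul_nonneg (zero_le_one.trans (hN.one_le_pointWeight t)) (abs_nonneg _)
  suffices h : ∀ ε > 0, N x ≤ S + ε * (‖x‖ + C) by
    have hlim : Tendsto (fun ε => S + ε * (‖x‖ + C)) (𝓝[>] 0) (𝓝 S) :=
      tendsto_nhdsWithin_of_tendsto_nhds (Continuous.tendsto' (by fun_prop) 0 S (by simp))
    exact ge_of_tendsto hlim (eventually_nhdsWithin_of_forall h)
  intro ε hε
  choose u hu1 hNu using fun t => exists_apply_eq_one_lt_pointWeight_add N t hε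
  obtain ⟨T, hT⟩ := x.exists_finset_abs_lt_add hε u hu1
  obtain ⟨F, hF0, hfF, hNF⟩ := hN.exists_nonneg_upperBound_le T (fun t => |x t| • u t)
    (B := S + ε * ‖x‖) (by positivity) fun t _ =>
      calc N (|x t| • u t) ≤ |x t| * (pointWeight N t + ε) :=
            (hN.smul_le _ (abs_nonneg _) _).trans (by gcongr; exact (hNu t).le)
        _ = pointWeight N t * |x t| + ε * |x t| := by ring
        _ ≤ S + ε * ‖x‖ := by gcongr; exacts [hS t, x.abs_apply_le_norm t]
  have hxF : ∀ s, |x s| ≤ F s + ε := by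
    intro s
    by_cases hs : ε ≤ |x s|
    · obtain ⟨t, ht, hlt⟩ := hT s hs
      have := hfF t ht s
      simp only [ZeroAtInftyContinuousMap.smul_apply, smul_eq_mul] at this
      linarith
    · linarith [hF0 s]
  calc N x ≤ N F + C * ε := hN.le_add_of_abs_le_add hC hε.le hF0 hxF
    _ ≤ S + ε * ‖x‖ + C * ε := by gcongr
    _ = S + ε * (‖x‖ + C) := by ring

theorem exists_weight (hN : IsEquivMNorm N C) (hC : 0 ≤ C) :
    ∃ m : X → ℝ, (∀ t, 1 ≤ m t) ∧ (∀ t, m t ≤ C) ∧ ∀ x, N x = ⨆ t, m t * |x t| :=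
  ⟨pointWeight N, hN.one_le_pointWeight, hN.pointWeight_le, fun x =>
    le_antisymm (hN.le_iSup_pointWeight_mul_abs hC x)
      (Real.iSup_le (hN.pointWeight_mul_abs_le x) (hN.nonneg x))⟩

end IsEquivMNorm

def orbitSupNorm (G : Set (C₀(X, ℝ) ≃L[ℝ] C₀(X, ℝ))) (x : C₀(X, ℝ)) : ℝ := ⨆ g : G, ‖g.1 x‖

lemma isEquivMNorm_orbitSupNorm {G : Set (C₀(X, ℝ) ≃L[ℝ] C₀(X, ℝ))} {C : ℝ}
    (h_id : ContinuousLinearEquiv.refl ℝ C₀(X, ℝ) ∈ G)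
    (h_lat : ∀ g ∈ G, ∀ f₁ f₂ : C₀(X, ℝ), g (c0sup f₁ f₂) = c0sup (g f₁) (g f₂))
    (h_bdd : ∀ g ∈ G, ∀ x : C₀(X, ℝ), ‖g x‖ ≤ C * ‖x‖) :
    IsEquivMNorm (orbitSupNorm G) C := by
  have : Nonempty G := ⟨⟨_, h_id⟩⟩
  have hle (g : G) (x : C₀(X, ℝ)) : ‖g.1 x‖ ≤ orbitSupNorm G x :=
    le_ciSup ⟨C * ‖x‖, by rintro _ ⟨g, rfl⟩; exact h_bdd g.1 g.2 x⟩ g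
  refine ⟨fun x => by simpa using hle ⟨_, h_id⟩ x, fun x => ciSup_le fun g => h_bdd g.1 g.2 x,
    fun x y h => ciSup_le fun g => ?_, fun x y => ciSup_le fun g => ?_,
    fun c hc x => ciSup_le fun g => ?_, fun x y => ciSup_le fun g => ?_⟩
  · exact (norm_map_le_of_abs_le (h_lat g.1 g.2) h).trans (hle g y)
  · rw [map_add]
    exact (norm_add_le _ _).trans (add_le_add (hle g x) (hle g y))
  · rw [map_smul, norm_smul, Real.norm_of_nonneg hc]
    exact mul_le_mul_of_nonneg_left (hle g x) hc
  · rw [h_lat g.1 g.2]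
    exact (norm_c0sup_le _ _).trans (max_le_max (hle g x) (hle g y))

end

theorem stmt15_general {X : Type*} [TopologicalSpace X] [LocallyCompactSpace X]
    [TopologicalSpace.MetrizableSpace X]
    (G : Set (C₀(X, ℝ) ≃L[ℝ] C₀(X, ℝ)))
    (h_id : ContinuousLinearEquiv.refl ℝ C₀(X, ℝ) ∈ G)
    (h_lat : ∀ g ∈ G, ∀ f₁ f₂ : C₀(X, ℝ), g (c0sup f₁ f₂) = c0sup (g f₁) (g f₂))
    (C : ℝ) (hC : 1 ≤ C)
    (h_bdd : ∀ g ∈ G, ∀ x : C₀(X, ℝ), C⁻¹ * ‖x‖ ≤ ‖g x‖ ∧ ‖g x‖ ≤ C * ‖x‖) :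
    ∃ m : X → ℝ, (∃ c > 0, ∀ t, c ≤ m t) ∧ (∃ C' : ℝ, ∀ t, m t ≤ C') ∧
      ∀ x : C₀(X, ℝ), (⨆ g : G, ‖g.1 x‖) = ⨆ t : X, m t * |x t| := by
  obtain ⟨m, hm_ge, hm_le, hm⟩ :=
    (isEquivMNorm_orbitSupNorm h_id h_lat fun g hg x => (h_bdd g hg x).2).exists_weight
      (zero_le_one.trans hC)
  exact ⟨m, ⟨1, one_pos, hm_ge⟩, ⟨C, hm_le⟩, hm⟩

/-- **Theorem 6.1.** Let `X` be a locally compact metrizable space and `G` a bounded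
group of lattice isomorphisms of `C₀(X)`. Then there is a (not necessarily continuous)
function `m_G : X → (0, ∞)`, bounded and bounded away from `0`, such that
`‖x‖_G := sup_{g ∈ G} ‖g x‖ = sup_{t ∈ X} m_G(t) · |x(t)|` for all `x ∈ C₀(X)`. -/
theorem stmt15 {X : Type*} [TopologicalSpace X] [LocallyCompactSpace X]
    [TopologicalSpace.MetrizableSpace X]
    (G : Set (C₀(X, ℝ) ≃L[ℝ] C₀(X, ℝ)))
    (h_id : ContinuousLinearEquiv.refl ℝ C₀(X, ℝ) ∈ G)
    (h_comp : ∀ g ∈ G, ∀ h ∈ G, g.trans h ∈ G)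
    (h_inv : ∀ g ∈ G, g.symm ∈ G)
    (h_lat : ∀ g ∈ G, ∀ f₁ f₂ : C₀(X, ℝ), g (c0sup f₁ f₂) = c0sup (g f₁) (g f₂))
    (C : ℝ) (hC : 1 ≤ C)
    (h_bdd : ∀ g ∈ G, ∀ x : C₀(X, ℝ), C⁻¹ * ‖x‖ ≤ ‖g x‖ ∧ ‖g x‖ ≤ C * ‖x‖) :
    ∃ m : X → ℝ, (∃ c > 0, ∀ t, c ≤ m t) ∧ (∃ C' : ℝ, ∀ t, m t ≤ C') ∧
      ∀ x : C₀(X, ℝ), (⨆ g : G, ‖g.1 x‖) = ⨆ t : X, m t * |x t| :=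
  stmt15_general G h_id h_lat C hC h_bdd

end
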